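/- arXiv:1309.7751 — 5 statements merged into one kernel-verified Lean document; each statement's English description precedes it below -/
import Mathlib

section
/- If k ≥ 3 is odd and n ≡ 2 (mod 4), then n does not divide S_k(n) = 1^k + 2^k + ... + n^k. -/
/-!
Write `n = 2m` with `m` odd. Since `j ^ k ≡ j [MOD 2]` for `k ≠ 0`, the sum `S_k(n)` has the
parity of `1 + ⋯ + n = m (n + 1)`, which is odd. So `S_k(n)` is odd and the even number `n`
cannot divide it.
-/

open Finset

theorem Nat.pow_modEq_self_two (j : ℕ) {k : ℕ} (hk : k ≠ 0) : j ^ k ≡ j [MOD 2] := by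
  rcases Nat.even_or_odd j with hj | hj
  · exact (Nat.even_iff.1 ((Nat.even_pow' hk).2 hj)).trans (Nat.even_iff.1 hj).symm
  · exact (Nat.odd_iff.1 hj.pow).trans (Nat.odd_iff.1 hj).symm

theorem Finset.sum_Icc_one_id_mul_two (n : ℕ) : (∑ j ∈ Icc 1 n, j) * 2 = n * (n + 1) := by
  induction n with
  | zero => simp
  | succ n ih => rw [sum_Icc_succ_top (by omega), add_mul, ih]; ring

theorem odd_sum_Icc_one_id_of_mod_four_eq_two {n : ℕ} (hn : n % 4 = 2) :
    Odd (∑ j ∈ Icc 1 n, j) := by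
  have hsum := sum_Icc_one_id_mul_two n
  obtain ⟨q, rfl⟩ : ∃ q, n = 4 * q + 2 := ⟨n / 4, by omega⟩
  rw [Nat.odd_iff]
  have : (∑ j ∈ Icc 1 (4 * q + 2), j) * 2 = 16 * (q * q) + 20 * q + 6 := by rw [hsum]; ring
  omega

theorem stmt_2_general (n k : ℕ) (hk3 : 3 ≤ k) (hn : n % 4 = 2) :
    ¬ n ∣ ∑ j ∈ Finset.Icc 1 n, j ^ k := by
  intro hdvd
  have heven : Even (∑ j ∈ Icc 1 n, j ^ k) :=
    even_iff_two_dvd.2 (dvd_trans ⟨n / 2, by omega⟩ hdvd)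
  have hparity : ∑ j ∈ Icc 1 n, j ^ k ≡ ∑ j ∈ Icc 1 n, j [MOD 2] :=
    Nat.ModEq.sum fun j _ => j.pow_modEq_self_two (by omega)
  have hodd := Nat.odd_iff.1 (odd_sum_Icc_one_id_of_mod_four_eq_two hn)
  rw [Nat.ModEq, hodd, ← Nat.odd_iff] at hparity
  exact Nat.not_even_iff_odd.2 hparity heven

theorem stmt_2 (n k : ℕ) (hk : Odd k) (hk3 : 3 ≤ k) (hn : n % 4 = 2) :
    ¬ n ∣ ∑ j ∈ Finset.Icc 1 n, j ^ k :=
  stmt_2_general n k hk3 hn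
end

section
/- For odd k ≥ 3, the average (1^k + 2^k + ... + n^k)/n is an integer if and only if n is incongruent to 2 modulo 4. -/
/-!
Reducing modulo `n`, the numbers `1, …, n` run once through `ZMod n`, so `n ∣ S_k(n)` iff
`∑ x : ZMod n, x ^ k = 0`. As `k` is odd, the terms at `x` and `-x` cancel, leaving the sum over
the solutions of `-x = x`: these are `0` and, for `n = 2m`, also `m`. Unless `m` is odd, each of
them has `x ^ 2 = 0`, which kills the sum as `k ≥ 2`; for odd `m`, `m ^ 2 ≡ m [MOD 2m]`, so the sum
is `m ^ k = m ≠ 0`.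
-/

open Finset

lemma Function.Odd.sum_eq_sum_filter_neg_eq_self {α β : Type*} [Fintype α] [DecidableEq α]
    [InvolutiveNeg α] [AddCommGroup β] {f : α → β} (hf : f.Odd) :
    ∑ a, f a = ∑ a with -a = a, f a := by
  rw [← sum_filter_add_sum_filter_not univ (fun a => -a = a), add_eq_left]
  refine sum_involution (fun a _ => -a) (fun a _ => by rw [hf, add_neg_cancel])
    (fun a ha _ => (mem_filter.mp ha).2) (fun a ha => ?_) (fun a _ => neg_neg a)
  simpa [eq_comm] using ha

lemma ZMod.sum_univ_eq_sum_range {M : Type*} [AddCommMonoid M] (n : ℕ) [NeZero n]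
    (f : ZMod n → M) : ∑ x, f x = ∑ i ∈ range n, f i :=
  sum_nbij' ZMod.val Nat.cast (fun x _ => mem_range.mpr x.val_lt) (fun _ _ => mem_univ _)
    (fun x _ => ZMod.natCast_zmod_val x) (fun i hi => ZMod.val_cast_of_lt (mem_range.mp hi))
    (fun x _ => by rw [ZMod.natCast_zmod_val])

lemma natCast_sum_Icc_pow_eq_sum_zmod (n k : ℕ) [NeZero n] (hk : k ≠ 0) :
    ((∑ j ∈ Icc 1 n, j ^ k : ℕ) : ZMod n) = ∑ x : ZMod n, x ^ k := by
  push_cast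
  rw [ZMod.sum_univ_eq_sum_range n (· ^ k), ← Ico_add_one_right_eq_Icc,
    sum_Ico_succ_top NeZero.one_le, range_eq_Ico, sum_eq_sum_Ico_succ_bot (NeZero.pos n)]
  simp [zero_pow hk]

lemma ZMod.sq_eq_zero_of_neg_eq_self {n : ℕ} [NeZero n] (h4 : n % 4 ≠ 2) {a : ZMod n}
    (ha : -a = a) : a ^ 2 = 0 := by
  rcases (ZMod.neg_eq_self_iff a).mp ha with rfl | hval
  · exact zero_pow two_ne_zero
  obtain ⟨t, ht⟩ : ∃ t, a.val = 2 * t := ⟨n / 4, by omega⟩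
  have hn : ((4 * t : ℕ) : ZMod n) = 0 := by rw [← ZMod.natCast_self n]; congr 1; omega
  rw [← ZMod.natCast_zmod_val a, ht]
  push_cast at hn ⊢
  linear_combination (t : ZMod n) * hn

lemma ZMod.neg_eq_self_iff_eq_zero_or_eq_natCast {m : ℕ} [NeZero m] (x : ZMod (2 * m)) :
    -x = x ↔ x = 0 ∨ x = m := by
  rw [ZMod.neg_eq_self_iff, Nat.mul_left_cancel_iff two_pos]
  refine or_congr_right ⟨fun h => (ZMod.natCast_zmod_val x).symm.trans (congrArg Nat.cast h),
    fun h => ?_⟩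
  rw [h, ZMod.val_natCast, Nat.mod_eq_of_lt (by have := NeZero.pos m; omega)]

lemma ZMod.natCast_half_ne_zero {m : ℕ} [NeZero m] : (m : ZMod (2 * m)) ≠ 0 := by
  rw [Ne, ZMod.natCast_eq_zero_iff]
  intro h
  have := Nat.le_of_dvd (NeZero.pos m) h
  have := NeZero.pos m
  omega

lemma ZMod.isIdempotentElem_natCast_half {m : ℕ} (hm : Odd m) :
    IsIdempotentElem (m : ZMod (2 * m)) := by
  obtain ⟨s, rfl⟩ := hm
  have h : ((2 * (2 * s + 1) : ℕ) : ZMod (2 * (2 * s + 1))) = 0 := ZMod.natCast_self _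
  push_cast at h ⊢
  unfold IsIdempotentElem
  linear_combination (s : ZMod (2 * (2 * s + 1))) * h

lemma ZMod.sum_pow_eq_zero_iff {n k : ℕ} [NeZero n] (hk : Odd k) (hk3 : 3 ≤ k) :
    ∑ x : ZMod n, x ^ k = 0 ↔ n % 4 ≠ 2 := by
  rw [Function.Odd.sum_eq_sum_filter_neg_eq_self (fun x => hk.neg_pow x)]
  constructor
  · intro h h4
    obtain ⟨m, rfl⟩ : ∃ m, n = 2 * m := ⟨n / 2, by omega⟩
    have : NeZero m := ⟨by omega⟩
    have hm : Odd m := Nat.odd_iff.mpr (by omega)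
    have htors : ({x : ZMod (2 * m) | -x = x} : Finset _) = {0, (m : ZMod (2 * m))} := by
      ext x
      simp [ZMod.neg_eq_self_iff_eq_zero_or_eq_natCast]
    rw [htors, sum_pair ZMod.natCast_half_ne_zero.symm, zero_pow (by omega), zero_add,
      (ZMod.isIdempotentElem_natCast_half hm).pow_eq (by omega)] at h
    exact ZMod.natCast_half_ne_zero h
  · intro h4
    refine sum_eq_zero fun a ha => ?_
    rw [show k = 2 + (k - 2) by omega, pow_add,
      ZMod.sq_eq_zero_of_neg_eq_self h4 (mem_filter.mp ha).2, zero_mul]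

lemma exists_intCast_eq_natCast_div_iff_dvd {a n : ℕ} (hn : n ≠ 0) :
    (∃ m : ℤ, (a : ℚ) / n = m) ↔ n ∣ a := by
  constructor
  · rintro ⟨m, hm⟩
    rw [div_eq_iff (Nat.cast_ne_zero.mpr hn)] at hm
    exact Int.natCast_dvd_natCast.mp ⟨m, by exact_mod_cast hm.trans (mul_comm _ _)⟩
  · rintro ⟨c, rfl⟩
    exact ⟨c, by push_cast; field_simp⟩

theorem stmt_3 (n k : ℕ) (hn : 1 ≤ n) (hk : Odd k) (hk3 : 3 ≤ k) :
    (∃ m : ℤ, ((∑ j ∈ Finset.Icc 1 n, j ^ k : ℕ) : ℚ) / (n : ℚ) = (m : ℚ)) ↔ n % 4 ≠ 2 := by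
  have : NeZero n := ⟨by omega⟩
  rw [exists_intCast_eq_natCast_div_iff_dvd (NeZero.ne n), ← ZMod.natCast_eq_zero_iff,
    natCast_sum_Icc_pow_eq_sum_zmod n k (by omega), ZMod.sum_pow_eq_zero_iff hk hk3]
end

section
/- Let p be a prime with (p−1) not dividing k, a ≥ 1, and r ≥ 0. Then ∑_{m=rp^a+1}^{(r+1)p^a} m^k ≡ 0 (mod p^a). -/
/-!
The m-th term depends only on m mod p^a, and the interval runs once through all residues, so the
sum is ∑_{x ∈ ℤ/p^a} x^k. A unit c of ℤ/p^a lifting a generator g of (ℤ/p)ˣ satisfies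
c^k ≢ 1 (mod p), since g^k ≠ 1 exactly when (p - 1) ∤ k; hence c^k - 1 is a unit. Substituting
x ↦ c x shows (c^k - 1) ∑ x^k = 0.
-/

open Finset

theorem Fintype.sum_pow_eq_zero_of_isUnit_pow_sub_one {R : Type*} [CommRing R] [Fintype R]
    {c : R} {k : ℕ} (hc : IsUnit c) (hck : IsUnit (c ^ k - 1)) : ∑ x : R, x ^ k = 0 := by
  have hdil : ∑ x : R, (c * x) ^ k = ∑ x : R, x ^ k :=
    Fintype.sum_bijective _ (IsUnit.isUnit_iff_mulLeft_bijective.mp hc) _ _ fun _ => rfl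
  refine hck.mul_right_eq_zero.mp ?_
  rw [sub_mul, one_mul, sub_eq_zero, mul_sum, ← hdil]
  simp only [mul_pow]

namespace ZMod

theorem isUnit_of_cast_ne_zero {p a : ℕ} [Fact p.Prime] {x : ZMod (p ^ a)}
    (hx : (x.cast : ZMod p) ≠ 0) : IsUnit x := by
  have hpx : ¬ p ∣ x.val := by
    rwa [← natCast_eq_zero_iff, ← cast_eq_val]
  rw [← natCast_zmod_val x, isUnit_iff_coprime]
  exact (Nat.coprime_comm.mp ((Fact.out : p.Prime).coprime_iff_not_dvd.mpr hpx)).pow_right a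

theorem exists_isUnit_and_isUnit_pow_sub_one {p k a : ℕ} [Fact p.Prime] (hnd : ¬ (p - 1) ∣ k)
    (ha : a ≠ 0) : ∃ c : ZMod (p ^ a), IsUnit c ∧ IsUnit (c ^ k - 1) := by
  have hdvd : p ∣ p ^ a := dvd_pow_self p ha
  obtain ⟨g, hg⟩ := IsCyclic.exists_generator (α := (ZMod p)ˣ)
  have hgk : g ^ k ≠ 1 := by
    refine fun h => hnd ?_
    rw [← card_units p, ← Nat.card_eq_fintype_card, ← orderOf_eq_card_of_forall_mem_zpowers hg]
    exact orderOf_dvd_of_pow_eq_one h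
  obtain ⟨u, rfl⟩ := unitsMap_surjective hdvd g
  refine ⟨u, u.isUnit, isUnit_of_cast_ne_zero ?_⟩
  rw [cast_sub hdvd, cast_pow hdvd, cast_one hdvd, ← unitsMap_val, sub_ne_zero,
    ← Units.val_pow_eq_pow_val, Ne, Units.val_eq_one]
  exact hgk

theorem sum_pow_eq_zero {p k : ℕ} [Fact p.Prime] (hnd : ¬ (p - 1) ∣ k) (a : ℕ) :
    ∑ x : ZMod (p ^ a), x ^ k = 0 := by
  rcases eq_or_ne a 0 with rfl | ha
  · have : Subsingleton (ZMod (p ^ 0)) := by rw [pow_zero]; infer_instance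
    exact Subsingleton.elim _ _
  obtain ⟨c, hc, hck⟩ := exists_isUnit_and_isUnit_pow_sub_one hnd ha
  exact Fintype.sum_pow_eq_zero_of_isUnit_pow_sub_one hc hck

theorem sum_range_natCast {M : Type*} [AddCommMonoid M] (n : ℕ) [NeZero n] (f : ZMod n → M) :
    ∑ i ∈ range n, f i = ∑ x : ZMod n, f x :=
  sum_nbij' (↑) val (fun _ _ => mem_univ _) (fun x _ => mem_range.mpr (val_lt x))
    (fun _ hi => val_cast_of_lt (mem_range.mp hi)) (fun x _ => natCast_zmod_val x)
    fun _ _ => rfl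

theorem sum_Ico_natCast {M : Type*} [AddCommMonoid M] (n s : ℕ) [NeZero n] (f : ZMod n → M) :
    ∑ m ∈ Ico s (s + n), f m = ∑ x : ZMod n, f x := by
  rw [sum_Ico_eq_sum_range, Nat.add_sub_cancel_left]
  push_cast
  rw [sum_range_natCast n (fun x => f (s + x))]
  exact Fintype.sum_equiv (Equiv.addLeft _) _ _ fun _ => rfl

end ZMod

theorem stmt_10_general (p k a r : ℕ) (hp : p.Prime) (hnd : ¬ (p - 1) ∣ k) :
    (p ^ a : ℕ) ∣ ∑ m ∈ Finset.Icc (r * p ^ a + 1) ((r + 1) * p ^ a), m ^ k := by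
  have : Fact p.Prime := ⟨hp⟩
  have : NeZero (p ^ a) := ⟨pow_ne_zero a hp.ne_zero⟩
  rw [← ZMod.natCast_eq_zero_iff, ← Ico_add_one_right_eq_Icc,
    show (r + 1) * p ^ a + 1 = r * p ^ a + 1 + p ^ a by ring]
  push_cast
  rw [ZMod.sum_Ico_natCast (p ^ a) _ (· ^ k), ZMod.sum_pow_eq_zero hnd]

theorem stmt_10 (p k a r : ℕ) (hp : p.Prime) (hk : 0 < k) (hnd : ¬ (p - 1) ∣ k) (ha : 1 ≤ a) :
    (p ^ a : ℕ) ∣ ∑ m ∈ Finset.Icc (r * p ^ a + 1) ((r + 1) * p ^ a), m ^ k :=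
  stmt_10_general p k a r hp hnd
end

section
/- Let n be a positive integer and k ≥ 2 even. If some prime p divides n with (p−1) | k, then n does not divide S_k(n) = 1^k + ... + n^k. -/
/-!
Write `T(N) = powerSum k N = ∑_{0 ≤ j < N} j ^ k`, so that `S_k(n) = T(n + 1) = T(n) + n ^ k` and `n ∣ S_k(n)`
iff `n ∣ T(n)`. Cutting `[0, c d)` into `c` blocks of length `d` and expanding `(m d + i) ^ k` to
first order in `m d` gives `T(c d) ≡ c T(d) + k d (∑_{m < c} m) T_{k-1}(d) mod d²`.
For `c = p`, `d = p ^ (a + 1)` and `k` even the correction term is divisible by `p ^ (a + 2)`,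
so `T(p ^ (a + 2)) ≡ p T(p ^ (a + 1)) mod p ^ (a + 2)`; together with Fermat's
`T(p) ≡ p - 1 ≡ -1 mod p` when `p - 1 ∣ k`, this gives `T(p ^ e) ≡ -p ^ (e - 1) mod p ^ e`.
If `n = p ^ e m` with `p ∤ m`, then `T(n) ≡ m T(p ^ e) ≡ -m p ^ (e - 1) ≢ 0 mod p ^ e`.
-/

open Finset

def powerSum (k N : ℕ) : ℤ := ∑ j ∈ range N, (j : ℤ) ^ k

theorem Finset.sum_range_mul_eq_sum_sum {M : Type*} [AddCommMonoid M] (f : ℕ → M) (c d : ℕ) :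
    ∑ j ∈ range (c * d), f j = ∑ m ∈ range c, ∑ i ∈ range d, f (m * d + i) := by
  induction c with
  | zero => simp
  | succ c ih => rw [Nat.succ_mul, sum_range_add, ih, sum_range_succ]

theorem sum_Icc_pow_eq_powerSum {k : ℕ} (hk : k ≠ 0) (n : ℕ) :
    ∑ j ∈ Icc 1 n, (j : ℤ) ^ k = powerSum k (n + 1) := by
  rw [powerSum, sum_range_succ', ← Ico_add_one_right_eq_Icc, sum_Ico_eq_sum_range]
  simp [zero_pow hk, add_comm]

theorem powerSum_succ (k n : ℕ) : powerSum k (n + 1) = powerSum k n + (n : ℤ) ^ k :=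
  sum_range_succ _ _

theorem powerSum_mul_modEq_sq (k c d : ℕ) :
    powerSum k (c * d) ≡ c * powerSum k d + k * d * (∑ m ∈ range c, (m : ℤ)) * powerSum (k - 1) d
      [ZMOD (d : ℤ) ^ 2] := by
  have hterm : ∀ m i : ℕ, ((m * d + i : ℕ) : ℤ) ^ k
      ≡ (i : ℤ) ^ k + k * d * m * (i : ℤ) ^ (k - 1) [ZMOD (d : ℤ) ^ 2] := by
    intro m i
    have h := (pow_dvd_pow_of_dvd (dvd_mul_left (d : ℤ) m) 2).trans
      (sq_dvd_add_pow_sub_sub ((m : ℤ) * d) i k)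
    refine (Int.modEq_iff_dvd.2 ?_).symm
    push_cast
    exact h.trans (dvd_of_eq (by ring))
  calc powerSum k (c * d)
      ≡ ∑ m ∈ range c, ∑ i ∈ range d, ((i : ℤ) ^ k + k * d * m * (i : ℤ) ^ (k - 1))
        [ZMOD (d : ℤ) ^ 2] := by
        rw [powerSum, sum_range_mul_eq_sum_sum]
        exact Int.ModEq.sum fun m _ => Int.ModEq.sum fun i _ => hterm m i
    _ = _ := by
        simp only [sum_add_distrib, ← mul_sum, ← sum_mul, sum_const, card_range, nsmul_eq_mul,
          powerSum]

theorem Nat.dvd_mul_sum_range_of_even {k : ℕ} (hk : Even k) (n : ℕ) :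
    n ∣ k * ∑ m ∈ range n, m := by
  obtain ⟨t, rfl⟩ := hk
  refine ⟨t * (n - 1), ?_⟩
  rw [← two_mul, mul_comm 2 t, mul_assoc, mul_comm 2, sum_range_id_mul_two]
  ring

theorem powerSum_mul_modEq (k c d : ℕ) :
    powerSum k (c * d) ≡ c * powerSum k d [ZMOD d] := by
  have h := (powerSum_mul_modEq_sq k c d).of_dvd (dvd_pow_self (d : ℤ) two_ne_zero)
  refine h.trans (Int.modEq_iff_dvd.2 ?_)
  exact ⟨-(k * (∑ m ∈ range c, (m : ℤ)) * powerSum (k - 1) d), by ring⟩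

theorem powerSum_prime_modEq_neg_one {p k : ℕ} (hp : p.Prime) (hk : k ≠ 0) (hpk : p - 1 ∣ k) :
    powerSum k p ≡ -1 [ZMOD p] := by
  have := Fact.mk hp
  have hunit : ∀ j ∈ range (p - 1), ((j : ZMod p) + 1) ^ k = 1 := by
    intro j hj
    obtain ⟨t, rfl⟩ := hpk
    rw [pow_mul, ZMod.pow_card_sub_one_eq_one, one_pow]
    rw [← Nat.cast_succ, Ne, ZMod.natCast_eq_zero_iff]
    exact Nat.not_dvd_of_pos_of_lt j.succ_pos (by simp at hj; omega)
  have hrange : range p = range (p - 1 + 1) := by rw [Nat.sub_add_cancel hp.one_le]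
  rw [← ZMod.intCast_eq_intCast_iff, powerSum, hrange, sum_range_succ']
  push_cast
  rw [sum_congr rfl hunit, sum_const, card_range, zero_pow hk, nsmul_one, Nat.cast_sub hp.one_le,
    ZMod.natCast_self]
  ring

theorem powerSum_prime_pow_succ_modEq {p k : ℕ} (hke : Even k) (a : ℕ) :
    powerSum k (p ^ (a + 2)) ≡ p * powerSum k (p ^ (a + 1)) [ZMOD (p : ℤ) ^ (a + 2)] := by
  have h := powerSum_mul_modEq_sq k p (p ^ (a + 1))
  rw [← pow_succ'] at h
  refine (h.of_dvd ?_).trans (Int.modEq_iff_dvd.2 ?_)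
  · push_cast
    rw [← pow_mul]
    exact pow_dvd_pow _ (by omega)
  · obtain ⟨c, hc⟩ := Nat.dvd_mul_sum_range_of_even hke p
    refine ⟨-(c * powerSum (k - 1) (p ^ (a + 1))), ?_⟩
    have hc' := congrArg (Nat.cast : ℕ → ℤ) hc
    push_cast at hc' ⊢
    linear_combination (-(p : ℤ) ^ (a + 1) * powerSum (k - 1) (p ^ (a + 1))) * hc'

theorem powerSum_prime_pow_modEq {p k : ℕ} (hp : p.Prime) (hk : k ≠ 0) (hke : Even k)
    (hpk : p - 1 ∣ k) (a : ℕ) :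
    powerSum k (p ^ (a + 1)) ≡ -(p : ℤ) ^ a [ZMOD (p : ℤ) ^ (a + 1)] := by
  induction a with
  | zero => simpa using powerSum_prime_modEq_neg_one hp hk hpk
  | succ a ih =>
    refine (powerSum_prime_pow_succ_modEq hke a).trans ?_
    have h := ih.mul_left' (c := (p : ℤ))
    rwa [← pow_succ', mul_neg, ← pow_succ'] at h

theorem not_dvd_powerSum {p k m : ℕ} (hp : p.Prime) (hk : k ≠ 0) (hke : Even k)
    (hpk : p - 1 ∣ k) (hpm : ¬ p ∣ m) (a : ℕ) :
    ¬ (p : ℤ) ^ (a + 1) ∣ powerSum k (p ^ (a + 1) * m) := by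
  intro h
  have hmod : powerSum k (p ^ (a + 1) * m) ≡ m * -(p : ℤ) ^ a [ZMOD (p : ℤ) ^ (a + 1)] := by
    rw [mul_comm]
    exact_mod_cast (powerSum_mul_modEq k m (p ^ (a + 1))).trans
      ((powerSum_prime_pow_modEq hp hk hke hpk a).mul_left _)
  have hdvd : (p : ℤ) * p ^ a ∣ m * p ^ a := by
    rw [← pow_succ', ← dvd_neg, ← mul_neg, ← sub_add_cancel (m * -(p : ℤ) ^ a) (powerSum k _)]
    exact hmod.dvd.add h
  have hp0 : (p : ℤ) ^ a ≠ 0 := pow_ne_zero _ (by exact_mod_cast hp.ne_zero)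
  exact hpm (Int.natCast_dvd_natCast.1 ((mul_dvd_mul_iff_right hp0).1 hdvd))

theorem stmt_12 (n k : ℕ) (hn : 0 < n) (hk : 2 ≤ k) (hke : Even k)
    (h : ∃ p : ℕ, p.Prime ∧ p ∣ n ∧ (p - 1) ∣ k) :
    ¬ n ∣ ∑ j ∈ Finset.Icc 1 n, j ^ k := by
  obtain ⟨p, hp, hpn, hpk⟩ := h
  have hk0 : k ≠ 0 := by omega
  obtain ⟨e, m, hpm, rfl⟩ := Nat.exists_eq_pow_mul_and_not_dvd hn.ne' p hp.ne_one
  obtain ⟨a, rfl⟩ : ∃ a, e = a + 1 :=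
    Nat.exists_eq_add_one_of_ne_zero (by rintro rfl; exact hpm (by simpa using hpn))
  intro hdvd
  have hS : (p : ℤ) ^ (a + 1) * m ∣ powerSum k (p ^ (a + 1) * m) := by
    have h := Int.natCast_dvd_natCast.2 hdvd
    push_cast at h
    rwa [sum_Icc_pow_eq_powerSum hk0, powerSum_succ, dvd_add_left (dvd_pow_self _ hk0)] at h
  exact not_dvd_powerSum hp hk0 hke hpk hpm a (dvd_of_mul_right_dvd hS)
end

section
/- For even k ≥ 2, a prime p divides the denominator of the k-th Bernoulli number B_k if and only if (p−1) divides k (Von Staudt–Clausen). -/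
/-! By Mathlib's von Staudt–Clausen theorem, `B_k + ∑ 1/q` over the primes `q` with
`(q - 1) ∣ k` is an integer, so `B_k` has the same denominator as that sum of reciprocals of
distinct primes, whose prime divisors are exactly the primes summed over. -/

open Finset

namespace Rat

theorem prime_dvd_den_add_of_dvd_of_not_dvd {p : ℕ} (hp : p.Prime) {x y : ℚ}
    (hx : p ∣ x.den) (hy : ¬ p ∣ y.den) : p ∣ (x + y).den := by
  have hx' : p ∣ (x + y).den * (-y).den :=
    hx.trans (by simpa using add_den_dvd (x + y) (-y))
  rw [neg_den] at hx'
  exact (hp.dvd_mul.mp hx').resolve_right hy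

theorem not_prime_dvd_den_sum {ι : Type*} {p : ℕ} (hp : p.Prime) (s : Finset ι) {f : ι → ℚ}
    (hf : ∀ i ∈ s, ¬ p ∣ (f i).den) : ¬ p ∣ (∑ i ∈ s, f i).den := fun h ↦ by
  obtain ⟨i, hi, hdvd⟩ := (Prime.dvd_finsetProd_iff hp.prime _).mp
    (h.trans (Finset.Rat.den_sum_dvd_prod_den s f))
  exact hf i hi hdvd

end Rat

theorem prime_dvd_den_sum_one_div_primes_iff {p : ℕ} (hp : p.Prime) {s : Finset ℕ}
    (hs : ∀ q ∈ s, q.Prime) : p ∣ (∑ q ∈ s, (1 : ℚ) / q).den ↔ p ∈ s := by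
  have den_one_div {q : ℕ} (hq : q.Prime) : ((1 : ℚ) / q).den = q := by
    simp [hq.ne_zero]
  have hrest : ¬ p ∣ (∑ q ∈ s.erase p, (1 : ℚ) / q).den := by
    refine Rat.not_prime_dvd_den_sum hp _ fun q hq ↦ ?_
    obtain ⟨hqp, hq⟩ := mem_erase.mp hq
    rw [den_one_div (hs q hq), Nat.prime_dvd_prime_iff_eq hp (hs q hq)]
    exact Ne.symm hqp
  by_cases hps : p ∈ s
  · rw [← add_sum_erase s _ hps]
    exact iff_of_true (Rat.prime_dvd_den_add_of_dvd_of_not_dvd hp (by rw [den_one_div hp]) hrest)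
      hps
  · rw [erase_eq_of_notMem hps] at hrest
    exact iff_of_false hrest hps

theorem stmt_15 (k p : ℕ) (hk : 2 ≤ k) (hke : Even k) (hp : p.Prime) :
    p ∣ (bernoulli k).den ↔ (p - 1) ∣ k := by
  obtain ⟨m, rfl⟩ := hke
  rw [← two_mul] at hk ⊢
  obtain ⟨n, hn⟩ := Bernoulli.vonStaudt_clausen m
  rw [eq_sub_of_add_eq hn.symm, Rat.intCast_sub_den,
    prime_dvd_den_sum_one_div_primes_iff hp fun q hq ↦ (mem_filter.mp hq).2.1]
  simp only [mem_filter, mem_range, hp, true_and, and_iff_right_iff_imp]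
  -- Mathlib's sum is cut off at `range (2 * m + 2)`, which every such prime lies in.
  intro hdvd
  have := Nat.le_of_dvd (by omega) hdvd
  omega
end
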